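/- arXiv:0706.4353 — 2 statements merged into one kernel-verified Lean document; each statement's English description precedes it below -/
import Mathlib

section
/- Let f = T_r^k + g with k ≥ 1, where g ∈ K[T_1,…,T_{r−1}] involves only the first r−1 variables and f is weighted homogeneous of degree k·w_r. Then for every z ∈ K^r with f(z) = 0, the orbit cone ω(z) equals the convex cone in ℚ^n generated over ℚ_{≥0} by the weights w_j with 1 ≤ j ≤ r−1 and z_j ≠ 0. In particular, every orbit cone of a point of the hypersurface {f = 0} is of the form cone(w_j : j ∈ J) for some subset J ⊆ {1,…,r−1}. -/
/-! A weighted homogeneous `h` with `h(z) ≠ 0` has a monomial `T^ν` that does not vanish at `z`;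
its degree `∑ ν_i w_i` is then a nonnegative combination of weights `w_i` with `z_i ≠ 0`, while
`T_i` itself shows `w_i ∈ ω(z)` whenever `z_i ≠ 0`. So `ω(z) = cone(w_i : z_i ≠ 0)` for every `z`.
If moreover `f(z) = 0` and `z_r ≠ 0`, then `g(z) = -z_r^k ≠ 0`, so some monomial `T^μ` of `g`
survives at `z`; being also a monomial of `f`, it gives `k w_r = ∑_{i<r} μ_i w_i` with `z_i ≠ 0`
whenever `μ_i ≠ 0`, so `w_r` is redundant among the generators. -/

/-- The convex cone in `ℚ^n` generated over `ℚ_{≥0}` by a set `S`: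
all finite nonnegative rational combinations of elements of `S`. -/
def coneGen {n : ℕ} (S : Set (Fin n → ℚ)) : Set (Fin n → ℚ) :=
  {v | ∃ (s : Finset (Fin n → ℚ)) (c : (Fin n → ℚ) → ℚ),
    (∀ w ∈ s, 0 ≤ c w ∧ w ∈ S) ∧ v = ∑ w ∈ s, c w • w}

/-- A polynomial `h ∈ K[T_1,…,T_r]` is weighted homogeneous of degree `d ∈ ℤ^n`
with respect to weights `w : Fin r → ℤ^n` if every monomial `T^ν` occurring in `h`
satisfies `ν_1 w_1 + ⋯ + ν_r w_r = d`. -/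
def IsWeightedHom {K : Type*} [CommSemiring K] {r n : ℕ} (w : Fin r → Fin n → ℤ)
    (d : Fin n → ℤ) (h : MvPolynomial (Fin r) K) : Prop :=
  ∀ m ∈ h.support, ∑ i, (m i : ℤ) • w i = d

/-- The orbit cone `ω(z)` of a point `z ∈ K^r`: the convex cone in `ℚ^n`
generated over `ℚ_{≥0}` by all `d ∈ ℤ^n` admitting a weighted homogeneous
polynomial `h` of degree `d` with `h(z) ≠ 0`. -/
def orbitCone {K : Type*} [CommSemiring K] {r n : ℕ} (w : Fin r → Fin n → ℤ)
    (z : Fin r → K) : Set (Fin n → ℚ) :=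
  coneGen {v | ∃ (d : Fin n → ℤ) (h : MvPolynomial (Fin r) K),
    IsWeightedHom w d h ∧ MvPolynomial.eval z h ≠ 0 ∧ v = fun j => (d j : ℚ)}

lemma coneGen_eq_hull {n : ℕ} (S : Set (Fin n → ℚ)) :
    coneGen S = PointedCone.hull ℚ S := by
  ext v
  constructor
  · rintro ⟨s, c, hc, rfl⟩
    refine Submodule.sum_mem _ fun w hw => ?_
    exact Submodule.smul_mem _ (⟨c w, (hc w hw).1⟩ : {c : ℚ // 0 ≤ c})
      (Submodule.subset_span (hc w hw).2)
  · intro hv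
    obtain ⟨c, hcS, hc, rfl⟩ := PointedCone.mem_hull_set.mp hv
    exact ⟨c.support, c, fun w hw => ⟨hc w, hcS hw⟩, rfl⟩

open MvPolynomial

lemma exists_mem_support_forall_ne_zero_of_eval_ne_zero {K σ : Type*} [CommSemiring K]
    [Fintype σ] {z : σ → K} {h : MvPolynomial σ K} (hh : eval z h ≠ 0) :
    ∃ m ∈ h.support, ∀ i, m i ≠ 0 → z i ≠ 0 := by
  rw [eval_eq'] at hh
  obtain ⟨m, hm, hterm⟩ := Finset.exists_ne_zero_of_sum_ne_zero hh
  refine ⟨m, hm, fun i hi hzi => hterm ?_⟩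
  rw [Finset.prod_eq_zero (Finset.mem_univ i) (by rw [hzi, zero_pow hi]), mul_zero]

lemma IsWeightedHom.cast_eq_sum {K : Type*} [CommSemiring K] {r n : ℕ}
    {w : Fin r → Fin n → ℤ} {d : Fin n → ℤ} {h : MvPolynomial (Fin r) K}
    (hh : IsWeightedHom w d h) {m : Fin r →₀ ℕ} (hm : m ∈ h.support) :
    (fun t => (d t : ℚ)) = ∑ i, (m i : ℚ) • fun t => (w i t : ℚ) := by
  funext t
  simp [← hh m hm]

section OrbitCone

variable {K : Type*} [CommSemiring K] {r n : ℕ} (w : Fin r → Fin n → ℤ)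

lemma isWeightedHom_X (j : Fin r) : IsWeightedHom w (w j) (X j : MvPolynomial (Fin r) K) := by
  intro m hm
  rw [Finset.mem_singleton.mp (support_monomial_subset hm)]
  simp [Finsupp.single_apply]

lemma sum_smul_weight_mem_hull {m : Fin r → ℕ} {J : Set (Fin r)} (hJ : ∀ i, m i ≠ 0 → i ∈ J) :
    ∑ i, (m i : ℚ) • (fun t => (w i t : ℚ)) ∈
      PointedCone.hull ℚ ((fun i t => (w i t : ℚ)) '' J) := by
  refine Submodule.sum_mem _ fun i _ => ?_
  by_cases hi : m i = 0
  · simp [hi]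
  · rw [Nat.cast_smul_eq_nsmul]
    exact nsmul_mem (PointedCone.subset_hull (Set.mem_image_of_mem _ (hJ i hi))) _

theorem orbitCone_eq_hull (z : Fin r → K) :
    orbitCone w z = PointedCone.hull ℚ ((fun i t => (w i t : ℚ)) '' {i | z i ≠ 0}) := by
  rw [orbitCone, coneGen_eq_hull]
  apply le_antisymm
  · refine Submodule.span_le.mpr ?_
    rintro _ ⟨d, h, hh, hne, rfl⟩
    obtain ⟨m, hm, hzm⟩ := exists_mem_support_forall_ne_zero_of_eval_ne_zero hne
    rw [hh.cast_eq_sum hm]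
    exact sum_smul_weight_mem_hull w hzm
  · refine Submodule.span_mono ?_
    rintro _ ⟨i, hi, rfl⟩
    exact ⟨w i, X i, isWeightedHom_X w i, by simpa using hi, rfl⟩

end OrbitCone

lemma weight_mem_hull_of_eval_X_pow_add_eq_zero {K : Type*} [CommSemiring K] [NoZeroDivisors K]
    {r n : ℕ} (w : Fin r → Fin n → ℤ) {k : ℕ} (hk : k ≠ 0) {last : Fin r}
    {g : MvPolynomial (Fin r) K} (hg : ∀ m ∈ g.support, m last = 0)
    (hhom : IsWeightedHom w ((k : ℤ) • w last) (X last ^ k + g))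
    {z : Fin r → K} (hz : eval z (X last ^ k + g) = 0) (hzlast : z last ≠ 0) :
    (fun t => (w last t : ℚ)) ∈
      PointedCone.hull ℚ ((fun i t => (w i t : ℚ)) '' {j | j ≠ last ∧ z j ≠ 0}) := by
  have hgz : eval z g ≠ 0 := fun h0 => by
    simp only [map_add, map_pow, eval_X, h0, add_zero] at hz
    exact pow_ne_zero k hzlast hz
  obtain ⟨m, hm, hzm⟩ := exists_mem_support_forall_ne_zero_of_eval_ne_zero hgz
  have hm_last : m last = 0 := hg m hm
  have hm_f : m ∈ (X last ^ k + g).support := by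
    have hm_ne : Finsupp.single last k ≠ m := fun h => hk (by simpa [← h] using hm_last)
    rwa [mem_support_iff, coeff_add, coeff_X_pow, if_neg hm_ne, zero_add, ← mem_support_iff]
  have hdeg := hhom.cast_eq_sum hm_f
  have hlast_eq : (fun t => (w last t : ℚ)) =
      (k : ℚ)⁻¹ • ∑ i, (m i : ℚ) • fun t => (w i t : ℚ) := by
    rw [← hdeg]
    funext t
    simp [hk]
  rw [hlast_eq]
  refine Submodule.smul_mem _ (⟨(k : ℚ)⁻¹, by positivity⟩ : {c : ℚ // 0 ≤ c}) ?_
  exact sum_smul_weight_mem_hull w fun i hi => ⟨fun h => hi (h ▸ hm_last), hzm i hi⟩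

theorem orbitCone_of_hypersurface_point_general
    {K : Type*} [Field K] {r n : ℕ}
    (w : Fin r → Fin n → ℤ) (k : ℕ) (hk : 1 ≤ k)
    (last : Fin r)
    (g f : MvPolynomial (Fin r) K)
    (hg : ∀ m ∈ g.support, m last = 0)
    (hf : f = MvPolynomial.X last ^ k + g)
    (hfhom : IsWeightedHom w ((k : ℤ) • w last) f)
    (z : Fin r → K) (hz : MvPolynomial.eval z f = 0) :
    orbitCone w z =
      coneGen {v | ∃ j : Fin r, j ≠ last ∧ z j ≠ 0 ∧ v = fun t => (w j t : ℚ)} := by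
  subst hf
  have hgens : {v | ∃ j : Fin r, j ≠ last ∧ z j ≠ 0 ∧ v = fun t => (w j t : ℚ)} =
      (fun i t => (w i t : ℚ)) '' {j | j ≠ last ∧ z j ≠ 0} := by
    ext v
    simp [eq_comm, and_assoc]
  rw [orbitCone_eq_hull, hgens, coneGen_eq_hull]
  apply le_antisymm
  · refine Submodule.span_le.mpr ?_
    rintro _ ⟨i, hi, rfl⟩
    by_cases hil : i = last
    · subst hil
      exact weight_mem_hull_of_eval_X_pow_add_eq_zero w (by omega) hg hfhom hz hi
    · exact PointedCone.subset_hull ⟨i, ⟨hil, hi⟩, rfl⟩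
  · exact Submodule.span_mono (Set.image_mono fun j hj => hj.2)

/-- Let `f = T_r ^ k + g` with `k ≥ 1`, where `g` involves only the first `r − 1`
variables and `f` is weighted homogeneous of degree `k • w_r`. Then for every
`z ∈ K^r` with `f(z) = 0`, the orbit cone `ω(z)` equals the convex cone in `ℚ^n`
generated over `ℚ_{≥0}` by the weights `w_j` with `j ≠ r` and `z_j ≠ 0`. -/
theorem orbitCone_of_hypersurface_point
    {K : Type*} [Field K] {r n : ℕ} (hr : 2 ≤ r) (hn : 1 ≤ n)
    (w : Fin r → Fin n → ℤ) (k : ℕ) (hk : 1 ≤ k)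
    (last : Fin r) (hlast : (last : ℕ) = r - 1)
    (g f : MvPolynomial (Fin r) K)
    (hg : ∀ m ∈ g.support, m last = 0)
    (hf : f = MvPolynomial.X last ^ k + g)
    (hfhom : IsWeightedHom w ((k : ℤ) • w last) f)
    (z : Fin r → K) (hz : MvPolynomial.eval z f = 0) :
    orbitCone w z =
      coneGen {v | ∃ j : Fin r, j ≠ last ∧ z j ≠ 0 ∧ v = fun t => (w j t : ℚ)} :=
  orbitCone_of_hypersurface_point_general w k hk last g f hg hf hfhom z hz
end

section
/- Assume K is algebraically closed. Let f = T_r^k + g with k ≥ 1, where g ∈ K[T_1,…,T_{r−1}] involves only the first r−1 variables and f is weighted homogeneous of degree k·w_r. Then for every subset J ⊆ {1,…,r−1} there exists a point z ∈ K^r with f(z) = 0 whose orbit cone ω(z) equals the convex cone in ℚ^n generated over ℚ_{≥0} by the weights w_j with j ∈ J. -/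
lemma mem_coneGen_self {n : ℕ} {S : Set (Fin n → ℚ)} {v : Fin n → ℚ} (hv : v ∈ S) :
    v ∈ coneGen S :=
  ⟨{v}, fun _ => 1, by simp [hv], by simp⟩

lemma coneGen_zero {n : ℕ} (S : Set (Fin n → ℚ)) : (0 : Fin n → ℚ) ∈ coneGen S :=
  ⟨∅, fun _ => 0, by simp, by simp⟩

lemma coneGen_add {n : ℕ} {S : Set (Fin n → ℚ)} {a b : Fin n → ℚ}
    (ha : a ∈ coneGen S) (hb : b ∈ coneGen S) : a + b ∈ coneGen S := by
  obtain ⟨s, c, hc, rfl⟩ := ha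
  obtain ⟨s', c', hc', rfl⟩ := hb
  have key : ∀ (t : Finset (Fin n → ℚ)) (cc : (Fin n → ℚ) → ℚ), t ⊆ s ∪ s' →
      ∑ u ∈ s ∪ s', (if u ∈ t then cc u else 0) • u = ∑ u ∈ t, cc u • u := by
    intro t cc hts
    rw [← Finset.sum_subset hts (fun x _ hx => by rw [if_neg hx, zero_smul])]
    exact Finset.sum_congr rfl fun u hu => by rw [if_pos hu]
  refine ⟨s ∪ s', fun u => (if u ∈ s then c u else 0) + (if u ∈ s' then c' u else 0), ?_, ?_⟩
  · intro u hu
    refine ⟨add_nonneg ?_ ?_, ?_⟩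
    · split_ifs with h
      · exact (hc u h).1
      · exact le_refl 0
    · split_ifs with h
      · exact (hc' u h).1
      · exact le_refl 0
    · rcases Finset.mem_union.mp hu with h | h
      · exact (hc u h).2
      · exact (hc' u h).2
  · simp only [add_smul, Finset.sum_add_distrib]
    rw [key s c Finset.subset_union_left, key s' c' Finset.subset_union_right]

lemma coneGen_smul {n : ℕ} {S : Set (Fin n → ℚ)} {q : ℚ} (hq : 0 ≤ q) {a : Fin n → ℚ}
    (ha : a ∈ coneGen S) : q • a ∈ coneGen S := by
  obtain ⟨s, c, hc, rfl⟩ := ha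
  refine ⟨s, fun u => q * c u, fun u hu => ⟨mul_nonneg hq (hc u hu).1, (hc u hu).2⟩, ?_⟩
  rw [Finset.smul_sum]
  exact Finset.sum_congr rfl fun u _ => by rw [smul_smul]

lemma coneGen_sum {n : ℕ} {S : Set (Fin n → ℚ)} {ι : Type*} (s : Finset ι) (c : ι → ℚ)
    (u : ι → Fin n → ℚ) (h : ∀ i ∈ s, 0 ≤ c i ∧ u i ∈ coneGen S) :
    (∑ i ∈ s, c i • u i) ∈ coneGen S := by
  classical
  induction s using Finset.cons_induction with
  | empty => simpa using coneGen_zero S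
  | cons a t hat ih =>
    rw [Finset.sum_cons]
    exact coneGen_add (coneGen_smul (h a (Finset.mem_cons_self a t)).1
        (h a (Finset.mem_cons_self a t)).2)
      (ih fun i hi => h i (Finset.mem_cons_of_mem hi))

lemma coneGen_mono {n : ℕ} {S T : Set (Fin n → ℚ)} (h : S ⊆ T) : coneGen S ⊆ coneGen T := by
  rintro v ⟨s, c, hc, rfl⟩
  exact ⟨s, c, fun u hu => ⟨(hc u hu).1, h (hc u hu).2⟩, rfl⟩

lemma coneGen_subset {n : ℕ} {S T : Set (Fin n → ℚ)} (h : S ⊆ coneGen T) :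
    coneGen S ⊆ coneGen T := by
  rintro v ⟨s, c, hc, rfl⟩
  exact coneGen_sum s c id fun u hu => ⟨(hc u hu).1, h (hc u hu).2⟩

/-- The orbit cone of `z` is the cone generated by the weights of the coordinates
where `z` is nonzero; abstract version. -/
lemma orbitCone_eq_coneGen {K : Type*} [Field K] {r n : ℕ}
    (w : Fin r → Fin n → ℤ) (z : Fin r → K) (S : Set (Fin n → ℚ))
    (H1 : ∀ v ∈ S, ∃ j, z j ≠ 0 ∧ v = fun t => (w j t : ℚ))
    (H2 : ∀ i, z i ≠ 0 → (fun t => (w i t : ℚ)) ∈ coneGen S) :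
    orbitCone w z = coneGen S := by
  apply Set.Subset.antisymm
  · apply coneGen_subset
    rintro v ⟨d, h, hhom, heval, rfl⟩
    rw [MvPolynomial.eval_eq'] at heval
    obtain ⟨m, hm, hterm⟩ := Finset.exists_ne_zero_of_sum_ne_zero heval
    have hprod : ∀ i, m i ≠ 0 → z i ≠ 0 := by
      intro i hmi hzi
      apply hterm
      rw [mul_eq_zero]
      exact Or.inr (Finset.prod_eq_zero (Finset.mem_univ i) (by rw [hzi, zero_pow hmi]))
    have hd := hhom m hm
    have hv : (fun t => ((d t : ℚ))) =
        ∑ i ∈ Finset.univ.filter (fun i => m i ≠ 0), (m i : ℚ) • (fun t => (w i t : ℚ)) := by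
      rw [Finset.sum_filter_of_ne (fun i _ hne => by
        intro hmi0; apply hne; simp [hmi0])]
      funext t
      rw [← hd]
      push_cast [Finset.sum_apply, Pi.smul_apply]
      simp [mul_comm]
    rw [hv]
    refine coneGen_sum _ _ _ fun i hi => ⟨by positivity, ?_⟩
    exact H2 i (hprod i (Finset.mem_filter.mp hi).2)
  · apply coneGen_mono
    intro v hv
    obtain ⟨j, hzj, rfl⟩ := H1 v hv
    refine ⟨w j, MvPolynomial.X j, ?_, by simpa using hzj, rfl⟩
    intro m hm
    rw [MvPolynomial.support_X, Finset.mem_singleton] at hm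
    subst hm
    rw [Finset.sum_eq_single j]
    · simp
    · intro i _ hij
      simp [Finsupp.single_apply, (Ne.symm hij)]
    · simp

/-- Assume `K` is algebraically closed. Let `f = T_r ^ k + g` with `k ≥ 1`, where
`g` involves only the first `r − 1` variables and `f` is weighted homogeneous of
degree `k • w_r`. Then for every subset `J ⊆ {1,…,r−1}` there is a point `z ∈ K^r`
with `f(z) = 0` whose orbit cone equals the convex cone generated over `ℚ_{≥0}`
by the weights `w_j`, `j ∈ J`. -/
theorem exists_hypersurface_point_with_orbitCone
    {K : Type*} [Field K] [IsAlgClosed K] {r n : ℕ} (hr : 2 ≤ r) (hn : 1 ≤ n)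
    (w : Fin r → Fin n → ℤ) (k : ℕ) (hk : 1 ≤ k)
    (last : Fin r) (hlast : (last : ℕ) = r - 1)
    (g f : MvPolynomial (Fin r) K)
    (hg : ∀ m ∈ g.support, m last = 0)
    (hf : f = MvPolynomial.X last ^ k + g)
    (hfhom : IsWeightedHom w ((k : ℤ) • w last) f)
    (J : Set (Fin r)) (hJ : ∀ j ∈ J, j ≠ last) :
    ∃ z : Fin r → K, MvPolynomial.eval z f = 0 ∧
      orbitCone w z = coneGen {v | ∃ j ∈ J, v = fun t => (w j t : ℚ)} := by
  classical
  have hlastJ : last ∉ J := fun h => (hJ last h) rfl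
  set z0 : Fin r → K := fun j => if j ∈ J then 1 else 0 with hz0
  set c := MvPolynomial.eval z0 g with hcdef
  have hk0 : k ≠ 0 := by omega
  set S : Set (Fin n → ℚ) := {v | ∃ j ∈ J, v = fun t => (w j t : ℚ)} with hS
  by_cases hc : c = 0
  · refine ⟨z0, ?_, ?_⟩
    · rw [hf, map_add, map_pow, MvPolynomial.eval_X, ← hcdef, hc]
      have : z0 last = 0 := by simp [hz0, hlastJ]
      rw [this, zero_pow hk0, add_zero]
    · apply orbitCone_eq_coneGen
      · rintro v ⟨j, hjJ, rfl⟩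
        exact ⟨j, by simp [hz0, hjJ], rfl⟩
      · intro i hi
        have hiJ : i ∈ J := by
          by_contra h
          exact hi (by simp [hz0, h])
        exact mem_coneGen_self ⟨i, hiJ, rfl⟩
  · obtain ⟨a, ha⟩ := IsAlgClosed.exists_pow_nat_eq (-c) (n := k) (by omega)
    have ha0 : a ≠ 0 := by
      intro h
      rw [h, zero_pow hk0] at ha
      exact hc (neg_eq_zero.mp ha.symm)
    set z : Fin r → K := Function.update z0 last a with hz
    have hgz : MvPolynomial.eval z g = c := by
      rw [hcdef, MvPolynomial.eval_eq', MvPolynomial.eval_eq']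
      refine Finset.sum_congr rfl fun m hm => ?_
      congr 1
      refine Finset.prod_congr rfl fun i _ => ?_
      by_cases hi : i = last
      · subst hi; rw [hg m hm]; simp
      · rw [hz, Function.update_of_ne hi]
    have hzlast : z last = a := by simp [hz]
    have hzother : ∀ i, i ≠ last → z i = z0 i := fun i hi => by
      rw [hz, Function.update_of_ne hi]
    refine ⟨z, ?_, ?_⟩
    · rw [hf, map_add, map_pow, MvPolynomial.eval_X, hzlast, hgz, ha]
      ring
    · -- the key point: w last lies in the cone generated by the w_j, j ∈ J
      have hwlast : (fun t => (w last t : ℚ)) ∈ coneGen S := by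
        have hc' := hc
        rw [hcdef, MvPolynomial.eval_eq'] at hc'
        obtain ⟨m, hm, hterm⟩ := Finset.exists_ne_zero_of_sum_ne_zero hc'
        have hmJ : ∀ i, m i ≠ 0 → i ∈ J := by
          intro i hmi
          by_contra hiJ
          apply hterm
          rw [mul_eq_zero]
          refine Or.inr (Finset.prod_eq_zero (Finset.mem_univ i) ?_)
          simp [hz0, hiJ, zero_pow hmi]
        have hmf : m ∈ f.support := by
          rw [MvPolynomial.mem_support_iff, hf, MvPolynomial.coeff_add,
            MvPolynomial.coeff_X_pow]
          have hne : m ≠ Finsupp.single last k := by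
            intro he
            have h0 := hg m hm
            rw [he] at h0
            simp [Finsupp.single_apply] at h0
            omega
          rw [if_neg (Ne.symm hne), zero_add]
          exact MvPolynomial.mem_support_iff.mp hm
        have hdeg := hfhom m hmf
        have hwl : (fun t => (w last t : ℚ)) =
            (k : ℚ)⁻¹ • ∑ i ∈ Finset.univ.filter (fun i => m i ≠ 0),
              (m i : ℚ) • (fun t => (w i t : ℚ)) := by
          rw [Finset.sum_filter_of_ne (fun i _ hne => by
            intro hmi0; apply hne; simp [hmi0])]
          funext t
          have ht : (∑ i, (m i : ℤ) • w i) t = ((k : ℤ) • w last) t := by rw [hdeg]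
          simp only [Finset.sum_apply, Pi.smul_apply, smul_eq_mul] at ht
          have htQ := congrArg (fun x : ℤ => (x : ℚ)) ht
          push_cast at htQ
          simp only [Pi.smul_apply, Finset.sum_apply, smul_eq_mul]
          rw [htQ]
          rw [← mul_assoc, inv_mul_cancel₀ (by exact_mod_cast hk0 : (k : ℚ) ≠ 0), one_mul]
        rw [hwl]
        refine coneGen_smul (by positivity) (coneGen_sum _ _ _ fun i hi => ⟨by positivity, ?_⟩)
        exact mem_coneGen_self ⟨i, hmJ i (Finset.mem_filter.mp hi).2, rfl⟩
      apply orbitCone_eq_coneGen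
      · rintro v ⟨j, hjJ, rfl⟩
        refine ⟨j, ?_, rfl⟩
        rw [hzother j (hJ j hjJ)]
        simp [hz0, hjJ]
      · intro i hi
        by_cases hil : i = last
        · subst hil; exact hwlast
        · have hiJ : i ∈ J := by
            by_contra h
            rw [hzother i hil] at hi
            exact hi (by simp [hz0, h])
          exact mem_coneGen_self ⟨i, hiJ, rfl⟩
end
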